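/- arXiv:1310.3204 — 2 statements merged into one kernel-verified Lean document; each statement's English description precedes it below -/
import Mathlib

section
/- The extended double cover G* and the cartesian product G × K₂ are Laplacian cospectral if and only if G = K₁ or G is bipartite. -/
open Matrix Polynomial BigOperators
open scoped Classical

/-- The extended double cover `G*` of a graph `G`. -/
def edc {V : Type*} (G : SimpleGraph V) : SimpleGraph (V ⊕ V) where
  Adj u v := match u, v with
    | Sum.inl i, Sum.inr j => i = j ∨ G.Adj i j
    | Sum.inr i, Sum.inl j => i = j ∨ G.Adj i j
    | _, _ => False
  symm := ⟨by rintro (i|i) (j|j) h <;> simp_all <;> exact h.imp Eq.symm fun hh => G.adj_symm hh⟩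
  loopless := ⟨by rintro (i|i) h <;> simp_all⟩

/-- The Laplacian matrix `L = D − A` of a graph. -/
noncomputable def lap {V : Type*} [Fintype V] [DecidableEq V] (G : SimpleGraph V) :
    Matrix V V ℝ :=
  Matrix.diagonal (fun i => (G.degree i : ℝ)) - G.adjMatrix ℝ

/-!
Write `D` and `A` for the degree and adjacency matrices of `G`. The Laplacians of `G*` and of
`G □ K₂` both have the block form `[[X, Y], [Y, X]]`, whose characteristic polynomial is that of
`X - Y` times that of `X + Y`; this splits off a common factor `L(G)` and leaves `D + 2 + A` for
`G*` and `D + 2 - A` for `G □ K₂`.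

For a nonnegative diagonal `B`, a 2-colouring of `G` gives a sign diagonal conjugating `B + A`
to `B - A`. Conversely, if `B + A` and `B - A` are cospectral, then (both being symmetric) the
traces of all their powers agree. Expanding `(B + A)^k - (B - A)^k` into words in `B` and `A`,
every word with an odd number of `A`s survives with coefficient 2 and is entrywise nonnegative,
and for odd `k` one of them is `A^k`; so `tr A^k = 0`, i.e. `G` has no closed walk of odd length.
-/

def Equiv.sumSelfEquivProdFinTwo (V : Type*) : V ⊕ V ≃ V × Fin 2 where
  toFun := Sum.elim (·, 0) (·, 1)
  invFun p := if p.2 = 0 then Sum.inl p.1 else Sum.inr p.1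
  left_inv := by rintro (i | i) <;> simp
  right_inv := by rintro ⟨i, a⟩; fin_cases a <;> simp

namespace Matrix

section CommRing

variable {ι κ R : Type*} [Fintype ι] [DecidableEq ι] [CommRing R]

theorem charpoly_mul_mul_eq_of_mul_eq_one {P Q : Matrix ι ι R} (h : Q * P = 1)
    (M : Matrix ι ι R) : (P * M * Q).charpoly = M.charpoly := by
  rw [charpoly_mul_comm, ← mul_assoc, h, one_mul]

theorem charpoly_fromBlocks_self (X Y : Matrix ι ι R) :
    (fromBlocks X Y Y X).charpoly = (X - Y).charpoly * (X + Y).charpoly := by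
  have h : (fromBlocks 1 0 (-1) 1 * fromBlocks 1 0 1 1 : Matrix (ι ⊕ ι) (ι ⊕ ι) R) = 1 := by
    simp [fromBlocks_multiply, fromBlocks_one]
  rw [← charpoly_mul_mul_eq_of_mul_eq_one h, fromBlocks_multiply, fromBlocks_multiply]
  convert charpoly_fromBlocks_zero₂₁ (X - Y) Y (X + Y) using 3 <;> simp <;> abel

theorem charpoly_diagonal_mulVec_one_sub_fromBlocks (X Y : Matrix ι ι R) :
    (diagonal (fromBlocks X Y Y X *ᵥ 1) - fromBlocks X Y Y X).charpoly =
      (diagonal ((X + Y) *ᵥ 1) - X + Y).charpoly *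
        (diagonal ((X + Y) *ᵥ 1) - X - Y).charpoly := by
  have hrow : fromBlocks X Y Y X *ᵥ 1 = Sum.elim ((X + Y) *ᵥ 1) ((X + Y) *ᵥ 1) := by
    rw [fromBlocks_mulVec]; simp [add_mulVec, add_comm]
  rw [hrow, ← fromBlocks_diagonal, sub_eq_add_neg, fromBlocks_neg, fromBlocks_add,
    charpoly_fromBlocks_self]
  congr 2 <;> abel

theorem reindex_diagonal_mulVec_one_sub [Fintype κ] [DecidableEq κ] (e : ι ≃ κ)
    (M : Matrix ι ι R) :
    reindex e e (diagonal (M *ᵥ 1) - M) = diagonal (reindex e e M *ᵥ 1) - reindex e e M := by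
  ext i j
  simp [diagonal_apply, submatrix_mulVec_equiv]

end CommRing

section OrderedRing

variable {ι R : Type*} [Fintype ι] [CommRing R]

theorem mul_apply_le_mul_apply [PartialOrder R] [IsOrderedRing R] {A X Y : Matrix ι ι R}
    (hA : ∀ i j, 0 ≤ A i j) (h : ∀ i j, X i j ≤ Y i j) (i j : ι) :
    (A * X) i j ≤ (A * Y) i j :=
  Finset.sum_le_sum fun l _ => mul_le_mul_of_nonneg_left (h l j) (hA i l)

variable [DecidableEq ι]

/-- The sign `(-1)^j` is a parameter so that the induction can pass between
`(B + A)^k - (B - A)^k` and `(B + A)^k + (B - A)^k`, each step feeding on the other. -/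
theorem smul_pow_apply_le_add_pow_sub_sub_pow [PartialOrder R] [IsOrderedRing R]
    {A B : Matrix ι ι R} (hA : ∀ i j, 0 ≤ A i j) (hB : ∀ i j, 0 ≤ B i j) (k j : ℕ) (a b : ι) :
    ((1 - (-1) ^ (j + k) : R) • A ^ k) a b ≤ ((B + A) ^ k - (-1 : R) ^ j • (B - A) ^ k) a b := by
  induction k generalizing j a b with
  | zero => simp only [pow_zero, add_zero, sub_smul, one_smul, le_refl]
  | succ k ih =>
    have hrec : (B + A) ^ (k + 1) - (-1 : R) ^ j • (B - A) ^ (k + 1) =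
        B * ((B + A) ^ k - (-1 : R) ^ j • (B - A) ^ k) +
          A * ((B + A) ^ k - (-1 : R) ^ (j + 1) • (B - A) ^ k) := by
      rw [pow_succ', pow_succ', pow_succ, mul_neg_one, neg_smul, sub_neg_eq_add]
      simp only [add_mul, sub_mul, mul_add, mul_sub, mul_smul_comm, smul_sub]
      abel
    have hnonneg : ∀ a b, 0 ≤ ((B + A) ^ k - (-1 : R) ^ j • (B - A) ^ k) a b := by
      refine fun a b => le_trans ?_ (ih j a b)
      rw [smul_apply, smul_eq_mul]
      refine mul_nonneg ?_ (pow_apply_nonneg hA k a b)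
      rcases neg_one_pow_eq_or R (j + k) with h | h <;> rw [h] <;> norm_num
    calc ((1 - (-1) ^ (j + (k + 1)) : R) • A ^ (k + 1)) a b
        = (A * ((1 - (-1) ^ (j + 1 + k) : R) • A ^ k)) a b := by
          rw [mul_smul_comm, pow_succ', add_right_comm, add_assoc]
      _ ≤ (A * ((B + A) ^ k - (-1 : R) ^ (j + 1) • (B - A) ^ k)) a b :=
          mul_apply_le_mul_apply hA (ih (j + 1)) a b
      _ ≤ _ := by
          rw [hrec, add_apply]
          exact le_add_of_nonneg_left
            (Finset.sum_nonneg fun l _ => mul_nonneg (hB a l) (hnonneg l b))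

theorem pow_apply_self_eq_zero_of_trace_pow_eq [LinearOrder R] [IsStrictOrderedRing R]
    {A B : Matrix ι ι R} (hA : ∀ i j, 0 ≤ A i j) (hB : ∀ i j, 0 ≤ B i j) {k : ℕ} (hk : Odd k)
    (h : ((B + A) ^ k).trace = ((B - A) ^ k).trace) (i : ι) : (A ^ k) i i = 0 := by
  have hle : ∀ j, 2 * (A ^ k) j j ≤ ((B + A) ^ k - (B - A) ^ k) j j := fun j => by
    simpa [hk.neg_one_pow, one_add_one_eq_two] using
      smul_pow_apply_le_add_pow_sub_sub_pow hA hB k 0 j j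
  have hnonneg : ∀ j, 0 ≤ ((B + A) ^ k - (B - A) ^ k) j j := fun j =>
    (mul_nonneg zero_le_two (pow_apply_nonneg hA k j j)).trans (hle j)
  have hsum : ((B + A) ^ k - (B - A) ^ k).trace = 0 := by rw [trace_sub, h, sub_self]
  have hzero :=
    (Finset.sum_eq_zero_iff_of_nonneg fun j _ => hnonneg j).1 hsum i (Finset.mem_univ i)
  exact le_antisymm (by linarith [hle i]) (pow_apply_nonneg hA k i i)

end OrderedRing

theorem IsHermitian.trace_pow_eq_of_charpoly_eq {ι 𝕜 : Type*} [Fintype ι] [DecidableEq ι]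
    [RCLike 𝕜] {A B : Matrix ι ι 𝕜} (hA : A.IsHermitian) (hB : B.IsHermitian)
    (h : A.charpoly = B.charpoly) (k : ℕ) : (A ^ k).trace = (B ^ k).trace := by
  have hpow : (A ^ k).charpoly = (B ^ k).charpoly := by
    rw [← cfc_pow_id (R := ℝ) A k hA.isSelfAdjoint, ← cfc_pow_id (R := ℝ) B k hB.isSelfAdjoint,
      hA.charpoly_cfc_eq, hB.charpoly_cfc_eq, (hA.eigenvalues_eq_eigenvalues_iff hB).2 h]
  rw [trace_eq_neg_charpoly_nextCoeff, trace_eq_neg_charpoly_nextCoeff, hpow]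

end Matrix

namespace SimpleGraph

variable {V : Type*} [DecidableEq V] (G : SimpleGraph V)

theorem adjMatrix_edc :
    (edc G).adjMatrix ℝ = fromBlocks 0 (1 + G.adjMatrix ℝ) (1 + G.adjMatrix ℝ) 0 := by
  ext (i | i) (j | j) <;> rw [adjMatrix_apply] <;> by_cases h : i = j <;>
    simp [edc, one_apply, h]

theorem adjMatrix_boxProd_top_reindex :
    reindex (Equiv.sumSelfEquivProdFinTwo V).symm (Equiv.sumSelfEquivProdFinTwo V).symm
        ((G □ (⊤ : SimpleGraph (Fin 2))).adjMatrix ℝ) =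
      fromBlocks (G.adjMatrix ℝ) 1 1 (G.adjMatrix ℝ) := by
  ext (i | i) (j | j) <;> rw [reindex_apply, submatrix_apply] <;> by_cases h : i = j <;>
    simp [Equiv.sumSelfEquivProdFinTwo, adjMatrix_apply, one_apply, h]

variable [Fintype V]

section Bipartite

variable [DecidableRel G.Adj]

theorem colorable_two_of_adjMatrix_pow_apply_self_eq_zero {α : Type*} [Semiring α] [CharZero α]
    (h : ∀ k, Odd k → ∀ v, (G.adjMatrix α ^ k) v v = 0) : G.Colorable 2 := by
  refine two_colorable_iff_forall_loop_even.2 fun v w => ?_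
  by_contra hw
  have hcard := h w.length (Nat.not_even_iff_odd.1 hw) v
  rw [adjMatrix_pow_apply_eq_card_walk, Nat.cast_eq_zero, Fintype.card_eq_zero_iff] at hcard
  exact hcard.elim ⟨w, rfl⟩

theorem charpoly_diagonal_add_adjMatrix_eq_of_colorable {R : Type*} [CommRing R] (d : V → R)
    (hG : G.Colorable 2) :
    (diagonal d + G.adjMatrix R).charpoly = (diagonal d - G.adjMatrix R).charpoly := by
  obtain ⟨c⟩ := hG
  set s : V → R := fun v => (-1) ^ (c v : ℕ)
  have hs : ∀ v, s v * s v = 1 := fun v => by simp [s, ← mul_pow]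
  have hss : diagonal s * diagonal s = 1 := by
    rw [diagonal_mul_diagonal, ← diagonal_one]
    exact congrArg diagonal (funext hs)
  have hadj : ∀ {u v}, G.Adj u v → s u * s v = -1 := fun {u v} huv => by
    have hne := Fin.val_ne_of_ne (c.valid huv)
    have hu := (c u).isLt
    have hv := (c v).isLt
    rw [← pow_add, show (c u : ℕ) + c v = 1 by omega, pow_one]
  have hconj : diagonal s * (diagonal d + G.adjMatrix R) * diagonal s =
      diagonal d - G.adjMatrix R := by
    ext u v
    rw [mul_diagonal, diagonal_mul]
    by_cases huv : u = v
    · subst huv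
      simp [mul_right_comm _ (d u), hs]
    · by_cases h : G.Adj u v
      · rw [Matrix.add_apply, Matrix.sub_apply, diagonal_apply_ne _ huv, adjMatrix_apply,
          if_pos h, zero_add, zero_sub]
        linear_combination hadj h
      · simp [huv, h]
  rw [← hconj, charpoly_mul_mul_eq_of_mul_eq_one hss]

theorem charpoly_diagonal_add_adjMatrix_eq_iff (d : V → ℝ) (hd : ∀ v, 0 ≤ d v) :
    (diagonal d + G.adjMatrix ℝ).charpoly = (diagonal d - G.adjMatrix ℝ).charpoly ↔
      G.Colorable 2 := by
  refine ⟨fun h => G.colorable_two_of_adjMatrix_pow_apply_self_eq_zero (α := ℝ) fun k hk v => ?_,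
    G.charpoly_diagonal_add_adjMatrix_eq_of_colorable d⟩
  have hD : (diagonal d).IsHermitian := isHermitian_diagonal d
  have hA : (G.adjMatrix ℝ).IsHermitian := G.isHermitian_adjMatrix ℝ
  refine pow_apply_self_eq_zero_of_trace_pow_eq (fun i j => ?_) (fun i j => ?_) hk
    ((hD.add hA).trace_pow_eq_of_charpoly_eq (hD.sub hA) h k) v
  · rw [adjMatrix_apply]; split_ifs <;> norm_num
  · rw [diagonal_apply]; split_ifs <;> simp [hd]

end Bipartite

theorem lap_eq_diagonal_adjMatrix_mulVec_one_sub :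
    lap G = diagonal (G.adjMatrix ℝ *ᵥ 1) - G.adjMatrix ℝ := by
  unfold lap
  congr
  ext v
  simp

theorem charpoly_lap_edc :
    (lap (edc G)).charpoly =
      (diagonal (fun v => (G.degree v : ℝ) + 2) + G.adjMatrix ℝ).charpoly * (lap G).charpoly := by
  rw [lap_eq_diagonal_adjMatrix_mulVec_one_sub, adjMatrix_edc,
    charpoly_diagonal_mulVec_one_sub_fromBlocks, lap_eq_diagonal_adjMatrix_mulVec_one_sub]
  congr 2 <;> ext i j <;> by_cases h : i = j <;> simp [h, add_mulVec, one_apply]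
  ring

theorem charpoly_lap_boxProd_top :
    (lap (G □ (⊤ : SimpleGraph (Fin 2)))).charpoly =
      (diagonal (fun v => (G.degree v : ℝ) + 2) - G.adjMatrix ℝ).charpoly * (lap G).charpoly := by
  rw [← charpoly_reindex (Equiv.sumSelfEquivProdFinTwo V).symm,
    lap_eq_diagonal_adjMatrix_mulVec_one_sub, reindex_diagonal_mulVec_one_sub,
    adjMatrix_boxProd_top_reindex, charpoly_diagonal_mulVec_one_sub_fromBlocks,
    lap_eq_diagonal_adjMatrix_mulVec_one_sub]
  congr 2 <;> ext i j <;> by_cases h : i = j <;> simp [h, add_mulVec, one_apply]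
  ring

end SimpleGraph

theorem stmt13_general {n : ℕ} (G : SimpleGraph (Fin n)) :
    (lap (edc G)).charpoly = (lap (G □ (⊤ : SimpleGraph (Fin 2)))).charpoly ↔
      n = 1 ∨ G.Colorable 2 := by
  rw [G.charpoly_lap_edc, G.charpoly_lap_boxProd_top, mul_left_inj' (charpoly_monic _).ne_zero,
    G.charpoly_diagonal_add_adjMatrix_eq_iff _ fun v => by positivity]
  refine ⟨Or.inr, Or.rec (fun h => ?_) id⟩
  subst h
  exact G.colorable_of_fintype.mono (by simp)

/-- The extended double cover `G*` and the cartesian product `G × K₂`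
are Laplacian cospectral if and only if `G = K₁` (i.e. `G` has one vertex) or `G`
is bipartite. -/
theorem stmt13 {n : ℕ} (hn : 0 < n) (G : SimpleGraph (Fin n)) :
    (lap (edc G)).charpoly = (lap (G □ (⊤ : SimpleGraph (Fin 2)))).charpoly ↔
      n = 1 ∨ G.Colorable 2 :=
  stmt13_general G
end

section
/- For any graph G on n vertices with m edges, LE(D^k[G]) = k·LE(G) + k(k−1)·Σᵢ|dᵢ − 2m/n|; in particular, if G is regular then LE(D^k[G]) = k·LE(G). -/
/-!
The Laplacian of `D^k[G]` is `D ⊗ k·I - A ⊗ J`, where `J` is the all-ones `k × k` matrix. `J` is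
symmetric with eigenvalues `k` (once) and `0` (`k - 1` times), so conjugating by `I ⊗ U`, with `U`
an orthonormal eigenbasis of `J`, makes the Laplacian block diagonal with one block
`k·D - k·A = k·L(G)` and `k - 1` blocks `k·D`. Hence the Laplacian spectrum of `D^k[G]` consists
of the `k μᵢ` and of the `k dᵢ` with multiplicity `k - 1`. The average degree `2M/N` of `D^k[G]`
is `k · 2m/n`, so every term `|ν - 2M/N|` is `k` times the corresponding term for `G`. When `G` is
`r`-regular, `dᵢ = r = 2m/n`.
-/

open Matrix Polynomial BigOperators
open scoped Classical

/-- The k-fold graph `D^k[G]`. -/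
def kfold {V : Type*} (G : SimpleGraph V) (k : ℕ) : SimpleGraph (V × Fin k) where
  Adj u v := G.Adj u.1 v.1
  symm := ⟨fun _ _ h => G.adj_symm h⟩
  loopless := ⟨fun u h => G.loopless.irrefl u.1 h⟩

open scoped Kronecker

theorem Polynomial.roots_prod_univ_X_sub_C {R ι : Type*} [CommRing R] [IsDomain R] [Fintype ι]
    (f : ι → R) : (∏ i, (X - C (f i))).roots = Finset.univ.val.map f := by
  rw [Finset.prod_eq_multiset_prod, ← roots_multiset_prod_X_sub_C (Finset.univ.val.map f),
    Multiset.map_map]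
  rfl

namespace Matrix

variable {R : Type*} [CommRing R] {n o : Type*} [Fintype n] [DecidableEq n]
  [Fintype o] [DecidableEq o]

theorem charpoly_blockDiagonal (M : o → Matrix n n R) :
    (blockDiagonal M).charpoly = ∏ i, (M i).charpoly := by
  have : charmatrix (blockDiagonal M) = blockDiagonal fun i => charmatrix (M i) := by
    ext ⟨u, i⟩ ⟨v, j⟩
    by_cases hij : i = j
    · subst hij
      by_cases huv : u = v
      · subst huv; simp [charmatrix_apply_eq]
      · simp [charmatrix_apply_ne _ _ _ (by simp [huv] : (u, i) ≠ (v, i)),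
          charmatrix_apply_ne _ _ _ huv]
    · simp [blockDiagonal_apply_ne _ _ _ hij,
        charmatrix_apply_ne _ _ _ (by simp [hij] : (u, i) ≠ (v, j))]
  rw [charpoly, this, det_blockDiagonal]
  rfl

variable {𝕜 : Type*} [RCLike 𝕜]

theorem IsHermitian.charpoly_smul {A : Matrix n n 𝕜} (hA : A.IsHermitian) (c : ℝ) :
    (c • A).charpoly = ∏ i, (X - C ((c * hA.eigenvalues i : ℝ) : 𝕜)) := by
  conv_lhs => rw [hA.spectral_theorem, Unitary.conjStarAlgAut_apply, ← smul_mul_assoc,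
    ← mul_smul_comm, charpoly_mul_comm, ← mul_assoc]
  rw [Unitary.coe_star_mul_self, one_mul, ← diagonal_smul, charpoly_diagonal]
  simp

theorem IsHermitian.charpoly_kronecker_one_sub_kronecker {H : Matrix o o 𝕜} (hH : H.IsHermitian)
    (D A : Matrix n n 𝕜) :
    (D ⊗ₖ (1 : Matrix o o 𝕜) - A ⊗ₖ H).charpoly =
      ∏ j, (D - (hH.eigenvalues j : 𝕜) • A).charpoly := by
  set U : Matrix o o 𝕜 := (hH.eigenvectorUnitary : Matrix o o 𝕜)
  have hUU : star U * U = 1 := Unitary.coe_star_mul_self _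
  have hUU' : U * star U = 1 := Unitary.coe_mul_star_self _
  have hH' : H = U * diagonal (RCLike.ofReal ∘ hH.eigenvalues) * star U := by
    conv_lhs => rw [hH.spectral_theorem, Unitary.conjStarAlgAut_apply]
  have hblock : D ⊗ₖ (1 : Matrix o o 𝕜) - A ⊗ₖ diagonal (RCLike.ofReal ∘ hH.eigenvalues) =
      blockDiagonal fun j => D - (hH.eigenvalues j : 𝕜) • A := by
    ext ⟨u, i⟩ ⟨v, j⟩
    by_cases hij : i = j
    · subst hij; simp [RCLike.real_smul_eq_coe_mul, mul_comm]
    · simp [blockDiagonal_apply_ne _ _ _ hij, one_apply_ne hij, diagonal_apply_ne _ hij]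
  have hconj : D ⊗ₖ (1 : Matrix o o 𝕜) - A ⊗ₖ H =
      (1 ⊗ₖ U) * (D ⊗ₖ (1 : Matrix o o 𝕜) - A ⊗ₖ diagonal (RCLike.ofReal ∘ hH.eigenvalues)) *
        (1 ⊗ₖ star U) := by
    simp only [mul_sub, sub_mul, ← mul_kronecker_mul, one_mul, mul_one, ← hH', hUU']
  rw [hconj, charpoly_mul_comm, ← mul_assoc, ← mul_kronecker_mul, hUU, one_mul,
    one_kronecker_one, one_mul, hblock, charpoly_blockDiagonal]

theorem roots_charpoly_of_fun_one {K o : Type*} [Field K] [Fintype o] [DecidableEq o]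
    [Nonempty o] :
    (of fun _ _ : o => (1 : K)).charpoly.roots =
      (Fintype.card o : K) ::ₘ Multiset.replicate (Fintype.card o - 1) 0 := by
  have hJ : (of fun _ _ : o => (1 : K)) = vecMulVec 1 1 := by ext; simp [vecMulVec_apply]
  have hcharpoly : (of fun _ _ : o => (1 : K)).charpoly =
      X ^ (Fintype.card o - 1) * (X - C (Fintype.card o : K)) := by
    obtain ⟨c, hc⟩ : ∃ c, Fintype.card o = c + 1 := Nat.exists_eq_add_one.mpr Fintype.card_pos
    rw [hJ, charpoly_vecMulVec, hc, one_dotProduct_one, hc, smul_eq_C_mul]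
    simp only [Nat.add_sub_cancel, pow_succ]
    push_cast
    ring
  rw [hcharpoly, roots_mul ((monic_X_pow _).mul (monic_X_sub_C _)).ne_zero, roots_X_pow,
    roots_X_sub_C, Multiset.nsmul_singleton, add_comm]
  rfl

end Matrix

section kfold

variable {V : Type*} (G : SimpleGraph V) (k : ℕ)

@[simp]
theorem kfold_adj {p q : V × Fin k} : (kfold G k).Adj p q ↔ G.Adj p.1 q.1 := Iff.rfl

variable [Fintype V]

theorem degree_kfold (u : V) (i : Fin k) : (kfold G k).degree (u, i) = G.degree u * k := by
  have : (kfold G k).neighborFinset (u, i) = G.neighborFinset u ×ˢ Finset.univ := by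
    ext q; simp
  rw [← SimpleGraph.card_neighborFinset_eq_degree, this, Finset.card_product,
    SimpleGraph.card_neighborFinset_eq_degree, Finset.card_univ, Fintype.card_fin]

theorem card_edgeFinset_kfold :
    (kfold G k).edgeFinset.card = k * k * G.edgeFinset.card := by
  have : 2 * (kfold G k).edgeFinset.card = 2 * (k * k * G.edgeFinset.card) := by
    rw [← SimpleGraph.sum_degrees_eq_twice_card_edges, Fintype.sum_prod_type]
    simp only [degree_kfold, Finset.sum_const, Finset.card_univ, Fintype.card_fin, smul_eq_mul]
    rw [← Finset.mul_sum, ← Finset.sum_mul, G.sum_degrees_eq_twice_card_edges]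
    ring
  omega

theorem lap_kfold [DecidableEq V] :
    lap (kfold G k) =
      (diagonal fun u => (k * G.degree u : ℝ)) ⊗ₖ (1 : Matrix (Fin k) (Fin k) ℝ) -
        G.adjMatrix ℝ ⊗ₖ of fun _ _ => 1 := by
  ext ⟨u, i⟩ ⟨v, j⟩
  by_cases huv : u = v
  · subst huv
    by_cases hij : i = j
    · subst hij; simp [lap, degree_kfold, mul_comm]
    · simp [lap, hij]
  · simp [lap, huv, SimpleGraph.adjMatrix_apply]

variable [DecidableEq V] [NeZero k]

theorem charpoly_lap_kfold :
    (lap (kfold G k)).charpoly =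
      ((k : ℝ) • lap G).charpoly * (diagonal fun u => (k * G.degree u : ℝ)).charpoly ^ (k - 1) := by
  have hJ : (of fun _ _ : Fin k => (1 : ℝ)).IsHermitian := by ext; simp
  have hspec : Finset.univ.val.map hJ.eigenvalues = (k : ℝ) ::ₘ Multiset.replicate (k - 1) 0 := by
    simpa [roots_charpoly_of_fun_one] using hJ.roots_charpoly_eq_eigenvalues.symm
  set g : ℝ → ℝ[X] := fun c =>
    (diagonal (fun u => (k * G.degree u : ℝ)) - c • G.adjMatrix ℝ).charpoly
  calc (lap (kfold G k)).charpoly = ((Finset.univ.val.map hJ.eigenvalues).map g).prod := by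
        rw [lap_kfold, hJ.charpoly_kronecker_one_sub_kronecker, Multiset.map_map,
          Finset.prod_map_val]
        rfl
    _ = g k * g 0 ^ (k - 1) := by simp [hspec]
    _ = _ := by simp [g, lap, smul_sub, ← diagonal_smul, Pi.smul_def]

theorem sum_eigenvalues_lap_kfold (hL : (lap G).IsHermitian) (hLk : (lap (kfold G k)).IsHermitian)
    (f : ℝ → ℝ) :
    ∑ p, f (hLk.eigenvalues p) =
      ∑ u, f (k * hL.eigenvalues u) + (k - 1) * ∑ u, f (k * G.degree u) := by
  have hroots : (lap (kfold G k)).charpoly.roots = Finset.univ.val.map hLk.eigenvalues := by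
    simpa using hLk.roots_charpoly_eq_eigenvalues
  have hne : (lap (kfold G k)).charpoly ≠ 0 := (charpoly_monic _).ne_zero
  rw [charpoly_lap_kfold] at hroots hne
  rw [roots_mul hne, roots_pow, hL.charpoly_smul, charpoly_diagonal, roots_prod_univ_X_sub_C,
    roots_prod_univ_X_sub_C] at hroots
  calc ∑ p, f (hLk.eigenvalues p) = ((Finset.univ.val.map hLk.eigenvalues).map f).sum := by
        rw [Multiset.map_map, Finset.sum_map_val]
        rfl
    _ = _ := by
        simp [← hroots, Multiset.map_nsmul, Multiset.sum_nsmul, Finset.sum_map_val,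
          Nat.cast_sub NeZero.one_le]

end kfold

theorem SimpleGraph.IsRegularOfDegree.two_mul_card_edgeFinset_div_card {V : Type*} [Fintype V]
    [Nonempty V] {G : SimpleGraph V} [DecidableRel G.Adj] {r : ℕ} (hG : G.IsRegularOfDegree r) :
    2 * (G.edgeFinset.card : ℝ) / Fintype.card V = r := by
  have : Fintype.card V * r = 2 * G.edgeFinset.card := by
    rw [← G.sum_degrees_eq_twice_card_edges, Finset.sum_congr rfl fun v _ => hG.degree_eq v]
    simp
  rw [div_eq_iff (by positivity)]
  exact_mod_cast (this.symm.trans (mul_comm _ _))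

/-- For any graph `G` on `n` vertices with `m` edges,
`LE(D^k[G]) = k·LE(G) + k(k−1)·Σᵢ|dᵢ − 2m/n|`; in particular, if `G` is regular
then `LE(D^k[G]) = k·LE(G)`.  Here `LE(H) = Σ |νᵢ − 2M/N|` over the Laplacian
eigenvalues `νᵢ` of a graph `H` with `N` vertices and `M` edges. -/
theorem stmt17 {n : ℕ} (G : SimpleGraph (Fin n)) (m : ℕ)
    (hm : G.edgeFinset.card = m)
    (hL : (lap G).IsHermitian) (k : ℕ) (hk : 1 ≤ k)
    (hLk : (lap (kfold G k)).IsHermitian) :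
    (∑ p, |hLk.eigenvalues p -
        2 * ((kfold G k).edgeFinset.card : ℝ) / (Fintype.card (Fin n × Fin k))| =
      (k : ℝ) * (∑ i, |hL.eigenvalues i - 2 * (m : ℝ) / (n : ℝ)|) +
        (k : ℝ) * ((k : ℝ) - 1) * ∑ i, |(G.degree i : ℝ) - 2 * (m : ℝ) / (n : ℝ)|) ∧
    (∀ r : ℕ, G.IsRegularOfDegree r →
      ∑ p, |hLk.eigenvalues p -
          2 * ((kfold G k).edgeFinset.card : ℝ) / (Fintype.card (Fin n × Fin k))| =
        (k : ℝ) * ∑ i, |hL.eigenvalues i - 2 * (m : ℝ) / (n : ℝ)|) := by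
  have : NeZero k := ⟨by omega⟩
  have hmean : 2 * ((kfold G k).edgeFinset.card : ℝ) / Fintype.card (Fin n × Fin k) =
      k * (2 * m / n) := by
    rw [card_edgeFinset_kfold, hm, Fintype.card_prod, Fintype.card_fin, Fintype.card_fin]
    push_cast
    rw [show 2 * (k * k * m : ℝ) = k * (2 * m) * k by ring,
      mul_div_mul_right _ _ (Nat.cast_ne_zero.mpr (NeZero.ne k)), mul_div_assoc]
  have hLE : ∑ p, |hLk.eigenvalues p -
        2 * ((kfold G k).edgeFinset.card : ℝ) / (Fintype.card (Fin n × Fin k))| =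
      k * (∑ i, |hL.eigenvalues i - 2 * m / n|) +
        k * (k - 1) * ∑ i, |(G.degree i : ℝ) - 2 * m / n| := by
    simp only [hmean, sum_eigenvalues_lap_kfold G k hL hLk fun x => |x - k * (2 * m / n)|,
      ← mul_sub, abs_mul, Nat.abs_cast, ← Finset.mul_sum]
    ring
  refine ⟨hLE, fun r hr => ?_⟩
  have hdeg : ∑ i, |(G.degree i : ℝ) - 2 * m / n| = 0 := Finset.sum_eq_zero fun i _ => by
    have : Nonempty (Fin n) := ⟨i⟩
    have hmean_deg := hr.two_mul_card_edgeFinset_div_card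
    rw [Fintype.card_fin, hm] at hmean_deg
    rw [hr.degree_eq, hmean_deg, sub_self, abs_zero]
  rw [hLE, hdeg, mul_zero, add_zero]
end
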